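/- Let X be a symmetric positive definite solution of the algebraic Riccati equation X A + Aᵀ X + R - X((1/λ²) B Bᵀ - (1/μ²) B̃ B̃ᵀ - (1/μ²) Π Πᵀ) X = 0 with R positive definite, and set H = -(1/λ²) Bᵀ X. Then for all ε, ξ, w, e: 2 εᵀ X ((A + B H) ε + B̃ ξ - Π w - B H e) ≤ -εᵀ R ε + μ²(‖ξ‖² + ‖w‖²) + λ² ‖H e‖². -/
import Mathlib


open Matrix

private lemma dp_self_nonneg {N : ℕ} (u : Fin N → ℝ) : 0 ≤ u ⬝ᵥ u :=
  Finset.sum_nonneg fun i _ => mul_self_nonneg _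

private lemma young_dp {N : ℕ} (c : ℝ) (hc : 0 < c) (u v : Fin N → ℝ) :
    2 * (u ⬝ᵥ v) ≤ (1 / c ^ 2) * (u ⬝ᵥ u) + c ^ 2 * (v ⬝ᵥ v) := by
  have h0 := dp_self_nonneg ((1 / c) • u - c • v)
  simp only [sub_dotProduct, dotProduct_sub, smul_dotProduct,
    dotProduct_smul, smul_eq_mul] at h0
  rw [dotProduct_comm v u] at h0
  have hc' : c ≠ 0 := ne_of_gt hc
  have hkey : 1 / c * (1 / c * (u ⬝ᵥ u) - c * (u ⬝ᵥ v)) - c * (1 / c * (u ⬝ᵥ v) - c * (v ⬝ᵥ v))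
      = (1 / c ^ 2) * (u ⬝ᵥ u) - 2 * (u ⬝ᵥ v) + c ^ 2 * (v ⬝ᵥ v) := by
    field_simp
    ring
  rw [hkey] at h0
  linarith

/-- Key dissipation inequality: if `X = Xᵀ > 0` solves the algebraic Riccati equation
`XA + AᵀX + R - X((1/λ²)BBᵀ - (1/μ²)B̃B̃ᵀ - (1/μ²)ΠΠᵀ)X = 0` with `R > 0`, and
`H = -(1/λ²)BᵀX`, then for all `ε, ξ, w, e`:
`2 εᵀ X ((A + BH)ε + B̃ξ - Πw - BHe) ≤ -εᵀRε + μ²(‖ξ‖² + ‖w‖²) + λ²‖He‖²`. -/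
theorem riccati_dissipation_inequality {n m p q : ℕ}
    (A : Matrix (Fin n) (Fin n) ℝ) (B : Matrix (Fin n) (Fin m) ℝ)
    (Bt : Matrix (Fin n) (Fin p) ℝ) (Pi : Matrix (Fin n) (Fin q) ℝ)
    (R X : Matrix (Fin n) (Fin n) ℝ)
    (l μ : ℝ) (hl : 0 < l) (hμ : 0 < μ)
    (hXsymm : X.IsSymm) (hXpos : X.PosDef) (hRpos : R.PosDef)
    (hRiccati : X * A + Aᵀ * X + R
        - X * ((1 / l ^ 2) • (B * Bᵀ) - (1 / μ ^ 2) • (Bt * Btᵀ)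
            - (1 / μ ^ 2) • (Pi * Piᵀ)) * X = 0)
    (H : Matrix (Fin m) (Fin n) ℝ) (hH : H = -(1 / l ^ 2) • (Bᵀ * X)) :
    ∀ (ε : Fin n → ℝ) (ξ : Fin p → ℝ) (w : Fin q → ℝ) (e : Fin n → ℝ),
      2 * (ε ⬝ᵥ X.mulVec ((A + B * H).mulVec ε + Bt.mulVec ξ
            - Pi.mulVec w - (B * H).mulVec e))
        ≤ -(ε ⬝ᵥ R.mulVec ε) + μ ^ 2 * ((ξ ⬝ᵥ ξ) + (w ⬝ᵥ w))
            + l ^ 2 * ((H.mulVec e) ⬝ᵥ (H.mulVec e)) := by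
  intro ε ξ w e
  have hl2 : l ^ 2 ≠ 0 := pow_ne_zero _ (ne_of_gt hl)
  set x : Fin n → ℝ := X.mulVec ε with hx
  set a : Fin m → ℝ := Bᵀ.mulVec x with ha
  set b : Fin p → ℝ := Btᵀ.mulVec x with hb
  set cv : Fin q → ℝ := Piᵀ.mulVec x with hcv
  -- symmetric move of X
  have hsym : ∀ u : Fin n → ℝ, ε ⬝ᵥ X.mulVec u = x ⬝ᵥ u := by
    intro u
    rw [Matrix.dotProduct_mulVec, ← Matrix.mulVec_transpose, hXsymm.eq]
  -- move a matrix across dot product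
  have hmove : ∀ {k : ℕ} (M : Matrix (Fin n) (Fin k) ℝ) (y : Fin n → ℝ) (u : Fin k → ℝ),
      y ⬝ᵥ M.mulVec u = (Mᵀ.mulVec y) ⬝ᵥ u := by
    intro k M y u
    rw [Matrix.dotProduct_mulVec, ← Matrix.mulVec_transpose]
  -- scalar form of the Riccati equation
  have hM : X * A + Aᵀ * X + R
      = X * ((1 / l ^ 2) • (B * Bᵀ) - (1 / μ ^ 2) • (Bt * Btᵀ)
          - (1 / μ ^ 2) • (Pi * Piᵀ)) * X := by
    exact sub_eq_zero.mp hRiccati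
  have hquadL : ε ⬝ᵥ ((X * A + Aᵀ * X + R).mulVec ε)
      = 2 * (x ⬝ᵥ A.mulVec ε) + ε ⬝ᵥ R.mulVec ε := by
    simp only [Matrix.add_mulVec, dotProduct_add, ← Matrix.mulVec_mulVec]
    rw [hsym (A.mulVec ε), hmove Aᵀ ε (X.mulVec ε), Matrix.transpose_transpose]
    rw [dotProduct_comm (A.mulVec ε) x]
    ring
  have hquadR : ε ⬝ᵥ ((X * ((1 / l ^ 2) • (B * Bᵀ) - (1 / μ ^ 2) • (Bt * Btᵀ)
          - (1 / μ ^ 2) • (Pi * Piᵀ)) * X).mulVec ε)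
      = (1 / l ^ 2) * (a ⬝ᵥ a) - (1 / μ ^ 2) * (b ⬝ᵥ b) - (1 / μ ^ 2) * (cv ⬝ᵥ cv) := by
    rw [← Matrix.mulVec_mulVec, ← Matrix.mulVec_mulVec, hsym]
    simp only [Matrix.sub_mulVec, Matrix.smul_mulVec, dotProduct_sub,
      dotProduct_smul, smul_eq_mul, ← Matrix.mulVec_mulVec]
    rw [hmove B x (Bᵀ.mulVec x), hmove Bt x (Btᵀ.mulVec x), hmove Pi x (Piᵀ.mulVec x),
      ← ha, ← hb, ← hcv]
  have hRic : 2 * (x ⬝ᵥ A.mulVec ε)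
      = -(ε ⬝ᵥ R.mulVec ε) + (1 / l ^ 2) * (a ⬝ᵥ a) - (1 / μ ^ 2) * (b ⬝ᵥ b)
        - (1 / μ ^ 2) * (cv ⬝ᵥ cv) := by
    have := congrArg (fun M : Matrix (Fin n) (Fin n) ℝ => ε ⬝ᵥ M.mulVec ε) hM
    rw [hquadL, hquadR] at this
    linarith
  -- BH terms
  have hBHmat : B * H = -(1 / l ^ 2) • (B * (Bᵀ * X)) := by
    rw [hH, Matrix.mul_smul]
  have hBHε : x ⬝ᵥ (B * H).mulVec ε = -(1 / l ^ 2) * (a ⬝ᵥ a) := by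
    rw [hBHmat, Matrix.smul_mulVec, dotProduct_smul, smul_eq_mul,
      ← Matrix.mulVec_mulVec, ← Matrix.mulVec_mulVec, hmove B x _, ← hx, ← ha]
  -- He relation : x ⬝ (B*H) e = a ⬝ (H e)
  have hBHe : x ⬝ᵥ (B * H).mulVec e = a ⬝ᵥ (H.mulVec e) := by
    rw [← Matrix.mulVec_mulVec, hmove B x (H.mulVec e), ← ha]
  -- expand LHS
  have hLHS : ε ⬝ᵥ X.mulVec ((A + B * H).mulVec ε + Bt.mulVec ξ
        - Pi.mulVec w - (B * H).mulVec e)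
      = x ⬝ᵥ A.mulVec ε + x ⬝ᵥ (B * H).mulVec ε + x ⬝ᵥ Bt.mulVec ξ
        - x ⬝ᵥ Pi.mulVec w - x ⬝ᵥ (B * H).mulVec e := by
    rw [hsym]
    simp only [Matrix.add_mulVec, dotProduct_add, dotProduct_sub]
  have hbξ : x ⬝ᵥ Bt.mulVec ξ = b ⬝ᵥ ξ := by
    rw [hmove Bt x ξ]
  have hcw : x ⬝ᵥ Pi.mulVec w = cv ⬝ᵥ w := by
    rw [hmove Pi x w]
  -- Young inequalities
  have y1 : 2 * (b ⬝ᵥ ξ) ≤ (1 / μ ^ 2) * (b ⬝ᵥ b) + μ ^ 2 * (ξ ⬝ᵥ ξ) := young_dp μ hμ b ξ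
  have y2 : 2 * (cv ⬝ᵥ (-w)) ≤ (1 / μ ^ 2) * (cv ⬝ᵥ cv) + μ ^ 2 * ((-w) ⬝ᵥ (-w)) :=
    young_dp μ hμ cv (-w)
  have y3 : 2 * (a ⬝ᵥ (-(H.mulVec e))) ≤ (1 / l ^ 2) * (a ⬝ᵥ a)
      + l ^ 2 * ((-(H.mulVec e)) ⬝ᵥ (-(H.mulVec e))) := young_dp l hl a _
  have hnw : (-w) ⬝ᵥ (-w) = w ⬝ᵥ w := by
    simp [neg_dotProduct, dotProduct_neg]
  have hnHe : (-(H.mulVec e)) ⬝ᵥ (-(H.mulVec e)) = (H.mulVec e) ⬝ᵥ (H.mulVec e) := by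
    simp [neg_dotProduct, dotProduct_neg]
  have hcwneg : cv ⬝ᵥ (-w) = -(cv ⬝ᵥ w) := by simp [dotProduct_neg]
  have haHe : a ⬝ᵥ (-(H.mulVec e)) = -(a ⬝ᵥ H.mulVec e) := by simp [dotProduct_neg]
  rw [hLHS, hBHε, hbξ, hcw, hBHe]
  rw [hnw] at y2
  rw [hnHe] at y3
  rw [hcwneg] at y2
  rw [haHe] at y3
  nlinarith [hRic, y1, y2, y3]
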